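/- For any k-dimensional linear subspace V of a Banach space X, there is a linear map π_V : X → V (an 'almost-projection') such that: (A) π_V(v) = v for all v ∈ V; (B) ‖π_V‖ ≤ c(k); and (C) for any k-dimensional subspace W with d_G(V,W) < ε, we have ‖π_V(w) − w‖ ≤ c(k) ε ‖w‖ for all w ∈ W. The constant c(k) depends only on k. -/

import Mathlib

/-!
Among all `k`-tuples of unit vectors of `V`, one maximizing `|det|` (with respect to any fixed
basis) is an Auerbach basis: by Cramer's rule its coordinate functionals are quotients of
determinants, so maximality bounds their norms by `1`. Extending them by Hahn–Banach and summing
gives a projection onto `V` of norm at most `k`. If `d_G(V, W) < ε`, the unit vector in the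
direction of `w ∈ W` lies within `ε` of a point of `V`, which the projection fixes, so
`‖π w - w‖ ≤ (‖π‖ + 1) ε ‖w‖`.
-/

open Metric

/-- The Grassmannian distance between two linear subspaces: the Hausdorff distance
between their intersections with the closed unit ball. -/
noncomputable def grassDist {X : Type} [NormedAddCommGroup X] [NormedSpace ℝ X]
    (V W : Submodule ℝ X) : ℝ :=
  hausdorffDist ((V : Set X) ∩ closedBall 0 1) ((W : Set X) ∩ closedBall 0 1)

open Module Function Set

section Auerbach

variable {E : Type*} [NormedAddCommGroup E] [NormedSpace ℝ E] {ι : Type*}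

theorem Module.Basis.continuous_det [Fintype ι] [DecidableEq ι] (b : Basis ι ℝ E) :
    Continuous b.det := by
  have := b.finiteDimensional_of_finite
  have hcoord (i : ι) : Continuous fun x : E => b.equivFun x i :=
    (continuous_apply i).comp b.equivFun.toLinearMap.continuous_of_finiteDimensional
  simp_rw [funext b.det_apply]
  exact (continuous_matrix fun i j => (hcoord i).comp (continuous_apply j)).matrix_det

theorem AlternatingMap.abs_apply_update_le_of_isMaxOn [DecidableEq ι] (f : E [⋀^ι]→ₗ[ℝ] ℝ)
    {e : ι → E} (he : e ∈ univ.pi fun _ => sphere (0 : E) 1)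
    (hmax : IsMaxOn (fun v => |f v|) (univ.pi fun _ => sphere (0 : E) 1) e) (i : ι) (x : E) :
    |f (update e i x)| ≤ |f e| * ‖x‖ := by
  rcases eq_or_ne x 0 with rfl | hx
  · simp
  have hx' : ‖x‖ ≠ 0 := norm_ne_zero_iff.mpr hx
  have hunit : update e i (‖x‖⁻¹ • x) ∈ univ.pi fun _ => sphere (0 : E) 1 := by
    intro j _
    rcases eq_or_ne j i with rfl | hj
    · simp [norm_smul, hx']
    · simpa [update_of_ne hj] using he j trivial
  calc |f (update e i x)| = ‖x‖ * |f (update e i (‖x‖⁻¹ • x))| := by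
        rw [f.map_update_smul, smul_eq_mul, abs_mul, abs_inv, abs_norm, mul_inv_cancel_left₀ hx']
    _ ≤ ‖x‖ * |f e| := mul_le_mul_of_nonneg_left (hmax hunit) (norm_nonneg x)
    _ = |f e| * ‖x‖ := mul_comm _ _

theorem Module.Basis.exists_isMaxOn_abs_det [Fintype ι] [DecidableEq ι] (b : Basis ι ℝ E) :
    ∃ e ∈ univ.pi fun _ => sphere (0 : E) 1,
      IsMaxOn (fun v => |b.det v|) (univ.pi fun _ => sphere (0 : E) 1) e ∧ b.det e ≠ 0 := by
  have := b.finiteDimensional_of_finite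
  have hb : (fun i => ‖b i‖⁻¹ • b i) ∈ univ.pi fun _ => sphere (0 : E) 1 := fun i _ =>
    mem_sphere_zero_iff_norm.mpr (norm_smul_inv_norm (𝕜 := ℝ) (b.ne_zero i))
  obtain ⟨e, he, hmax⟩ := (isCompact_univ_pi fun _ => isCompact_sphere (0 : E) 1).exists_isMaxOn
    ⟨_, hb⟩ b.continuous_det.abs.continuousOn
  refine ⟨e, he, hmax, fun h0 => ?_⟩
  have := hmax hb
  simp [h0, b.det.map_smul_univ, Finset.prod_eq_zero_iff, b.ne_zero, b.det_ne_zero] at this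

theorem Module.Basis.exists_auerbach [Fintype ι] (b : Basis ι ℝ E) :
    ∃ e : Basis ι ℝ E, (∀ i, ‖e i‖ = 1) ∧ ∀ i x, |e.coord i x| ≤ ‖x‖ := by
  classical
  obtain ⟨e, he, hmax, hdet⟩ := b.exists_isMaxOn_abs_det
  obtain ⟨hli, hsp⟩ := b.is_basis_iff_det.mpr (isUnit_iff_ne_zero.mpr hdet)
  refine ⟨Basis.mk hli hsp.ge, fun i => by simpa using he i trivial, fun i x => ?_⟩
  have hcoord : (Basis.mk hli hsp.ge).coord i x = (b.det e)⁻¹ * b.det (update e i x) := by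
    rw [eq_inv_mul_iff_mul_eq₀ hdet, ← smul_eq_mul, ← LinearMap.smul_apply,
      b.det_smul_mk_coord_eq_det_update]
    rfl
  rw [hcoord, abs_mul, abs_inv, inv_mul_le_iff₀ (abs_pos.mpr hdet)]
  exact b.det.abs_apply_update_le_of_isMaxOn he hmax i x

end Auerbach

variable {X : Type} [NormedAddCommGroup X] [NormedSpace ℝ X]

theorem Submodule.exists_projection_norm_le_finrank (V : Submodule ℝ X) [FiniteDimensional ℝ V] :
    ∃ π : X →L[ℝ] X, (∀ x, π x ∈ V) ∧ (∀ v ∈ V, π v = v) ∧ ‖π‖ ≤ finrank ℝ V := by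
  obtain ⟨e, he, hcoord⟩ := (Module.finBasis ℝ V).exists_auerbach
  let φ (i : Fin (finrank ℝ V)) : StrongDual ℝ V :=
    (e.coord i).mkContinuous 1 fun x => by simpa using hcoord i x
  have hφ (i) : ‖φ i‖ ≤ 1 := LinearMap.mkContinuous_norm_le _ zero_le_one _
  choose F hFφ hFnorm using fun i => exists_extension_norm_eq V (φ i)
  refine ⟨∑ i, (F i).smulRight (e i : X), fun x => ?_, fun v hv => ?_, ?_⟩
  · simpa using V.sum_mem fun i _ => V.smul_mem (F i x) (e i).2
  · have hF (i) : F i v = e.repr ⟨v, hv⟩ i := hFφ i ⟨v, hv⟩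
    have hsum := congrArg Subtype.val (e.sum_repr ⟨v, hv⟩)
    push_cast at hsum
    simpa only [sum_apply, ContinuousLinearMap.smulRight_apply, hF] using hsum
  · calc ‖∑ i, (F i).smulRight (e i : X)‖ ≤ ∑ i, ‖(F i).smulRight (e i : X)‖ := norm_sum_le _ _
      _ ≤ ∑ _i : Fin (finrank ℝ V), (1 : ℝ) := Finset.sum_le_sum fun i _ => by
          rw [ContinuousLinearMap.norm_smulRight_apply, hFnorm, ← Submodule.coe_norm, he, mul_one]
          exact hφ i
      _ = finrank ℝ V := by simp

theorem exists_mem_norm_sub_le_of_grassDist_lt {V W : Submodule ℝ X} {ε : ℝ}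
    (hd : grassDist V W < ε) {w : X} (hw : w ∈ W) : ∃ v ∈ V, ‖w - v‖ ≤ ε * ‖w‖ := by
  rcases eq_or_ne w 0 with rfl | hw0
  · exact ⟨0, V.zero_mem, by simp⟩
  have hslice (U : Submodule ℝ X) : ((U : Set X) ∩ closedBall 0 1).Nonempty ∧
      Bornology.IsBounded ((U : Set X) ∩ closedBall 0 1) :=
    ⟨⟨0, U.zero_mem, mem_closedBall_self zero_le_one⟩,
      isBounded_closedBall.subset inter_subset_right⟩
  have hu : ‖w‖⁻¹ • w ∈ (W : Set X) ∩ closedBall 0 1 :=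
    ⟨W.smul_mem _ hw, mem_closedBall_zero_iff.mpr (norm_smul_inv_norm (𝕜 := ℝ) hw0).le⟩
  obtain ⟨v, ⟨hvV, -⟩, hv⟩ := exists_dist_lt_of_hausdorffDist_lt' hu hd <|
    hausdorffEDist_ne_top_of_nonempty_of_bounded (hslice V).1 (hslice W).1 (hslice V).2
      (hslice W).2
  refine ⟨‖w‖ • v, V.smul_mem _ hvV, ?_⟩
  have hw' : w - ‖w‖ • v = ‖w‖ • (‖w‖⁻¹ • w - v) := by
    rw [smul_sub, smul_inv_smul₀ (norm_ne_zero_iff.mpr hw0)]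
  calc ‖w - ‖w‖ • v‖ = ‖w‖ * dist v (‖w‖⁻¹ • w) := by
        rw [hw', norm_smul, norm_norm, ← dist_eq_norm, dist_comm]
    _ ≤ ε * ‖w‖ := by rw [mul_comm]; exact mul_le_mul_of_nonneg_right hv.le (norm_nonneg w)

theorem norm_apply_sub_self_le_of_grassDist_lt {V W : Submodule ℝ X} (π : X →L[ℝ] X)
    (hπ : ∀ v ∈ V, π v = v) {ε : ℝ} (hd : grassDist V W < ε) {w : X} (hw : w ∈ W) :
    ‖π w - w‖ ≤ (‖π‖ + 1) * ε * ‖w‖ := by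
  obtain ⟨v, hv, hwv⟩ := exists_mem_norm_sub_le_of_grassDist_lt hd hw
  calc ‖π w - w‖ = ‖π (w - v) - (w - v)‖ := by rw [map_sub, hπ v hv, sub_sub_sub_cancel_right]
    _ ≤ ‖π‖ * ‖w - v‖ + ‖w - v‖ := (norm_sub_le _ _).trans (add_le_add (π.le_opNorm _) le_rfl)
    _ = (‖π‖ + 1) * ‖w - v‖ := by ring
    _ ≤ (‖π‖ + 1) * (ε * ‖w‖) := by gcongr
    _ = (‖π‖ + 1) * ε * ‖w‖ := by ring

/-- Every `k`-dimensional subspace of a Banach space admits an almost-projection: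
a bounded linear map onto it, restricting to the identity, with norm bounded by
`c(k)`, and with the tilting property (C). -/
theorem exists_almost_projection (k : ℕ) :
    ∃ c : ℝ, 0 < c ∧
      ∀ (X : Type) [NormedAddCommGroup X] [NormedSpace ℝ X] [CompleteSpace X]
        (V : Submodule ℝ X), FiniteDimensional ℝ V → Module.finrank ℝ V = k →
        ∃ π : X →L[ℝ] X,
          (∀ x : X, π x ∈ V) ∧
          (∀ v ∈ V, π v = v) ∧
          ‖π‖ ≤ c ∧
          ∀ (W : Submodule ℝ X), Module.finrank ℝ W = k →
            ∀ ε : ℝ, 0 < ε → grassDist V W < ε →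
              ∀ w ∈ W, ‖π w - w‖ ≤ c * ε * ‖w‖ := by
  refine ⟨k + 1, by positivity, fun X _ _ _ V _ hV => ?_⟩
  obtain ⟨π, hπV, hπ, hnorm⟩ := V.exists_projection_norm_le_finrank
  rw [hV] at hnorm
  refine ⟨π, hπV, hπ, by linarith, fun W _ ε _ hd w hw => ?_⟩
  calc ‖π w - w‖ ≤ (‖π‖ + 1) * ε * ‖w‖ := norm_apply_sub_self_le_of_grassDist_lt π hπ hd hw
    _ ≤ (k + 1) * ε * ‖w‖ := by gcongr
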